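/- arXiv:1711.03307 — 4 statements merged into one kernel-verified Lean document; each statement's English description precedes it below -/
import Mathlib

section
/- If C is a self-dual Z2Z2[u]-linear code in Z2^α × R^β (i.e., C = C^⊥), then its Gray image Φ(C) is a self-dual binary linear code of length α + 2β. -/
open TrivSqZeroExt

/-- The ring `R = Z₂ + uZ₂` with `u² = 0`. -/
abbrev R2 : Type := DualNumber (ZMod 2)

/-- The ambient space `Z₂^α × R^β`. -/
abbrev Amb (α β : ℕ) : Type := (Fin α → ZMod 2) × (Fin β → R2)

/-- Scalar multiplication of `R` on `Z₂^α × R^β`, where `R` acts on `Z₂`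
through the quotient map killing `u`. -/
def rsmul {α β : ℕ} (r : R2) (v : Amb α β) : Amb α β :=
  (fun i => r.fst * v.1 i, fun j => r * v.2 j)

/-- A `Z₂Z₂[u]`-linear code: a subset of `Z₂^α × R^β` closed under addition
and the `R`-action. -/
def IsLinearCode {α β : ℕ} (C : Set (Amb α β)) : Prop :=
  (0 : Amb α β) ∈ C ∧ (∀ v ∈ C, ∀ w ∈ C, v + w ∈ C) ∧ ∀ (r : R2), ∀ v ∈ C, rsmul r v ∈ C

/-- The inner product `⟨V,W⟩ = u·Σ aᵢdᵢ + Σ bⱼeⱼ ∈ R`. -/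
def innerP {α β : ℕ} (V W : Amb α β) : R2 :=
  DualNumber.eps * (inl (∑ i, V.1 i * W.1 i) : R2) + ∑ j, V.2 j * W.2 j

/-- The dual code. -/
def dualCode {α β : ℕ} (C : Set (Amb α β)) : Set (Amb α β) :=
  {W | ∀ V ∈ C, innerP V W = 0}

/-- The Gray map `Φ(x, r + uq) = (x, q, r + q)` into `Z₂^(α+2β)`. -/
def gray {α β : ℕ} (v : Amb α β) :
    (Fin α → ZMod 2) × (Fin β → ZMod 2) × (Fin β → ZMod 2) :=
  (v.1, fun j => (v.2 j).snd, fun j => (v.2 j).fst + (v.2 j).snd)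

/-- The standard binary inner product on `Z₂^(α+2β)`. -/
def binDot {α β : ℕ} (v w : (Fin α → ZMod 2) × (Fin β → ZMod 2) × (Fin β → ZMod 2)) :
    ZMod 2 :=
  ∑ i, v.1 i * w.1 i + ∑ j, v.2.1 j * w.2.1 j + ∑ j, v.2.2 j * w.2.2 j

/-- The dual of a binary code with respect to the standard inner product. -/
def binDual {α β : ℕ} (D : Set ((Fin α → ZMod 2) × (Fin β → ZMod 2) × (Fin β → ZMod 2))) :
    Set ((Fin α → ZMod 2) × (Fin β → ZMod 2) × (Fin β → ZMod 2)) :=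
  {w | ∀ v ∈ D, binDot v w = 0}

/-!
The binary inner product of two Gray images is `a + b` when `⟨V, W⟩ = a + u b`, while
`⟨uV, W⟩ = u a`. Since `C` is closed under multiplication by `u`, a binary vector orthogonal
to `Φ(C)` therefore has a preimage under the bijection `Φ` that is orthogonal to `C`, so
`Φ(C^⊥) = Φ(C)^⊥`; the theorem follows by applying `Φ` to `C = C^⊥`.
-/

namespace Gray

variable {α β : ℕ}

lemma binDot_gray (V W : Amb α β) :
    binDot (gray V) (gray W) = (innerP V W).fst + (innerP V W).snd := by
  have hcoord : ∀ r q e f : ZMod 2,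
      q * f + (r + q) * (e + f) = r * e + (r * f + q * e) := by decide
  simp only [binDot, gray, innerP, fst_add, snd_add, fst_mul, snd_mul, fst_sum, snd_sum,
    fst_inl, snd_inl, DualNumber.fst_eps, DualNumber.snd_eps, smul_eq_mul, op_smul_eq_mul,
    zero_mul, mul_zero, zero_add, one_mul]
  have hβ : ∑ j, (V.2 j).snd * (W.2 j).snd
        + ∑ j, ((V.2 j).fst + (V.2 j).snd) * ((W.2 j).fst + (W.2 j).snd)
      = ∑ j, (V.2 j).fst * (W.2 j).fst
        + ∑ j, ((V.2 j).fst * (W.2 j).snd + (V.2 j).snd * (W.2 j).fst) := by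
    rw [← Finset.sum_add_distrib, ← Finset.sum_add_distrib]
    exact Finset.sum_congr rfl fun j _ => hcoord _ _ _ _
  linear_combination hβ

lemma innerP_rsmul_eps (V W : Amb α β) :
    innerP (rsmul DualNumber.eps V) W = inr (innerP V W).fst := by
  ext
  · simp [innerP, rsmul, fst_mul, fst_sum]
  · simp [innerP, rsmul, snd_mul, snd_sum, fst_mul, fst_sum, mul_comm]

lemma binDot_gray_rsmul_eps (V W : Amb α β) :
    binDot (gray (rsmul DualNumber.eps V)) (gray W) = (innerP V W).fst := by
  rw [binDot_gray, innerP_rsmul_eps, fst_inr, snd_inr, zero_add]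

lemma gray_surjective : Function.Surjective (gray : Amb α β → _) := by
  intro w
  refine ⟨(w.1, fun j => inl (w.2.1 j + w.2.2 j) + inr (w.2.1 j)), ?_⟩
  have hchar : ∀ a b : ZMod 2, a + b + a = b := by decide
  ext j <;> simp [gray, hchar]

lemma image_gray_dualCode {C : Set (Amb α β)}
    (hC : ∀ v ∈ C, rsmul DualNumber.eps v ∈ C) :
    gray '' dualCode C = binDual (gray '' C) := by
  ext w
  constructor
  · rintro ⟨W, hW, rfl⟩ _ ⟨V, hV, rfl⟩
    rw [binDot_gray, hW V hV, fst_zero, snd_zero, add_zero]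
  · intro hw
    obtain ⟨W, rfl⟩ := gray_surjective w
    refine ⟨W, fun V hV => ?_, rfl⟩
    have hsum : (innerP V W).fst + (innerP V W).snd = 0 := by
      rw [← binDot_gray]
      exact hw _ ⟨V, hV, rfl⟩
    have hfst : (innerP V W).fst = 0 := by
      rw [← binDot_gray_rsmul_eps]
      exact hw _ ⟨_, hC V hV, rfl⟩
    rw [hfst, zero_add] at hsum
    exact TrivSqZeroExt.ext hfst hsum

end Gray

/-- The Gray image of a self-dual `Z₂Z₂[u]`-linear code is a self-dual
binary code of length `α + 2β`. -/
theorem gray_image_self_dual (α β : ℕ) (C : Set (Amb α β)) (hC : IsLinearCode C)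
    (hsd : C = dualCode C) : gray '' C = binDual (gray '' C) := by
  nth_rewrite 1 [hsd]
  exact Gray.image_gray_dualCode (hC.2.2 DualNumber.eps)
end

section
/- If C is a self-orthogonal Z2Z2[u]-linear code in Z2^α × R^β (i.e., C ⊆ C^⊥), then its Gray image Φ(C) is a self-orthogonal binary linear code of length α + 2β: Φ(C) ⊆ Φ(C)^⊥. -/
/- The Gray map turns the `R`-valued inner product into the binary one: for any `V, W`,
`Φ(V) · Φ(W) = fst ⟨V,W⟩ + snd ⟨V,W⟩`, because `q q' + (r + q)(r' + q') = r r' + (r q' + q r')`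
in characteristic 2. Hence `⟨V,W⟩ = 0` forces `Φ(V) · Φ(W) = 0`. -/

open TrivSqZeroExt

theorem DualNumber.fst_mul_add_snd_mul {A : Type*} [CommRing A] [CharP A 2]
    (x y : DualNumber A) :
    (x * y).fst + (x * y).snd = x.snd * y.snd + (x.fst + x.snd) * (y.fst + y.snd) := by
  simp only [fst_mul, snd_mul]
  linear_combination -(CharTwo.two_eq_zero (R := A)) * x.snd * y.snd

theorem innerP_fst {α β : ℕ} (V W : Amb α β) : (innerP V W).fst = ∑ j, (V.2 j * W.2 j).fst := by
  simp [innerP, fst_sum]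

theorem innerP_snd {α β : ℕ} (V W : Amb α β) :
    (innerP V W).snd = ∑ i, V.1 i * W.1 i + ∑ j, (V.2 j * W.2 j).snd := by
  simp [innerP, snd_sum]

theorem binDot_gray {α β : ℕ} (V W : Amb α β) :
    binDot (gray V) (gray W) = (innerP V W).fst + (innerP V W).snd := by
  calc binDot (gray V) (gray W)
      = ∑ i, V.1 i * W.1 i + ∑ j, ((V.2 j * W.2 j).fst + (V.2 j * W.2 j).snd) := by
        simp only [binDot, gray, DualNumber.fst_mul_add_snd_mul, Finset.sum_add_distrib]
        ring
    _ = (innerP V W).fst + (innerP V W).snd := by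
        rw [innerP_fst, innerP_snd, Finset.sum_add_distrib]
        ring

theorem gray_image_self_orthogonal_general (α β : ℕ) (C : Set (Amb α β))
    (hso : C ⊆ dualCode C) : gray '' C ⊆ binDual (gray '' C) := by
  rintro _ ⟨W, hW, rfl⟩ _ ⟨V, hV, rfl⟩
  rw [binDot_gray, hso hW V hV, fst_zero, snd_zero, add_zero]

/-- The Gray image of a self-orthogonal `Z₂Z₂[u]`-linear code is a
self-orthogonal binary code of length `α + 2β`. -/
theorem gray_image_self_orthogonal (α β : ℕ) (C : Set (Amb α β)) (hC : IsLinearCode C)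
    (hso : C ⊆ dualCode C) : gray '' C ⊆ binDual (gray '' C) :=
  gray_image_self_orthogonal_general α β C hso
end

section
/- Let β be an odd positive integer and θ*(x), σ*(x) polynomials over Z2 with σ* | θ* | x^β − 1. In R[x]/(x^β − 1) with R = Z2[u]/(u^2), the cyclic code generated by θ*(x) + u x^k σ*(x) equals the cyclic code generated by θ*(x) + u σ*(x), for any k ≥ 0. -/
open Polynomial

instance (I : Ideal (Polynomial R2)) : I.IsTwoSided := ⟨fun b ha => mul_comm b _ ▸ I.smul_mem _ ha⟩

/-- Lift a binary polynomial to a polynomial over `R`. -/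
noncomputable def liftR (p : Polynomial (ZMod 2)) : Polynomial R2 :=
  p.map (algebraMap (ZMod 2) R2)

/-!
Write `t = θ*`, `s = σ*`, `h = (x^β − 1)/θ*` and let `c` be a unit of `R[x]/(x^β − 1)`, such as
`x^k`. As `x^β − 1` is separable for odd `β`, there is a Bézout relation `p t + q h = 1`; since
`u² = 0` and `t h = 0`, it gives `u c s = (p c s u + q h) (t + u c s)`, hence also `t` lies in the
ideal generated by `t + u c s`. So that ideal is `(t, u c s) = (t, u s)`, independent of `c`.
-/

section CommRing

variable {A : Type*} [CommRing A]

theorem Ideal.span_add_mul_eq_span_pair {t h u : A} (s : A) (hu : u * u = 0)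
    (hth : t * h = 0) (hcop : IsCoprime t h) :
    Ideal.span {t + u * s} = Ideal.span {t, u * s} := by
  obtain ⟨p, q, hpq⟩ := hcop
  have hus : u * s ∈ Ideal.span {t + u * s} := Ideal.mem_span_singleton'.mpr
    ⟨p * s * u + q * h, by linear_combination (u * s) * hpq + p * s ^ 2 * hu + q * hth⟩
  have ht : t ∈ Ideal.span {t + u * s} := by
    simpa using sub_mem (Ideal.mem_span_singleton_self _) hus
  refine le_antisymm ?_ ?_
  · exact Ideal.span_singleton_le_iff_mem _ |>.mpr <|
      add_mem (Ideal.subset_span (by simp)) (Ideal.subset_span (by simp))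
  · rw [Ideal.span_le, Set.insert_subset_iff, Set.singleton_subset_iff]
    exact ⟨ht, hus⟩

theorem Ideal.span_pair_mul_unit_eq {x : A} (t u s : A) (hx : IsUnit x) :
    Ideal.span {t, u * (x * s)} = Ideal.span {t, u * s} := by
  rw [Ideal.span_insert, Ideal.span_insert, mul_left_comm, Ideal.span_singleton_mul_left_unit hx]

theorem Ideal.span_add_mul_unit_mul_eq {t h u x : A} (s : A) (hu : u * u = 0)
    (hth : t * h = 0) (hcop : IsCoprime t h) (hx : IsUnit x) :
    Ideal.span {t + u * x * s} = Ideal.span {t + u * s} := by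
  rw [mul_assoc, Ideal.span_add_mul_eq_span_pair _ hu hth hcop,
    Ideal.span_pair_mul_unit_eq _ _ _ hx, Ideal.span_add_mul_eq_span_pair _ hu hth hcop]

end CommRing

theorem Polynomial.isCoprime_of_mul_eq_X_pow_sub_one {K : Type*} [Field K] {n : ℕ}
    (hn : (n : K) ≠ 0) {f g : K[X]} (hfg : f * g = X ^ n - 1) : IsCoprime f g :=
  Separable.isCoprime (hfg ▸ X_pow_sub_one_separable_iff.mpr hn)

theorem cyclic_code_gen_indep_of_power_general (β k : ℕ) (hβ : Odd β)
    (θ σ : Polynomial (ZMod 2)) (hθ : θ ∣ X ^ β - 1) :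
    Ideal.span {Ideal.Quotient.mk (Ideal.span {(X : Polynomial R2) ^ β - 1})
        (liftR θ + C DualNumber.eps * X ^ k * liftR σ)} =
    Ideal.span {Ideal.Quotient.mk (Ideal.span {(X : Polynomial R2) ^ β - 1})
        (liftR θ + C DualNumber.eps * liftR σ)} := by
  -- Instance search does not find this: unifying the `Semiring R2[X]` used in the statement
  -- with the one underlying `Polynomial.commRing` is too expensive.
  let _ : CommRing (R2[X] ⧸ Ideal.span {(X : Polynomial R2) ^ β - 1}) :=
    @Ideal.Quotient.commRing R2[X] Polynomial.commRing _
  set π := Ideal.Quotient.mk (Ideal.span {(X : Polynomial R2) ^ β - 1})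
  obtain ⟨h, hh⟩ := hθ
  have hβ2 : (β : ZMod 2) ≠ 0 := by
    simpa [ZMod.natCast_eq_zero_iff_even, Nat.not_even_iff_odd] using hβ
  have hcop : IsCoprime (π (liftR θ)) (π (liftR h)) :=
    (isCoprime_of_mul_eq_X_pow_sub_one hβ2 hh.symm).map
      (π.comp (mapRingHom (algebraMap (ZMod 2) R2)))
  have hker : π (X ^ β - 1) = 0 :=
    Ideal.Quotient.eq_zero_iff_mem.mpr (Ideal.mem_span_singleton_self _)
  have hth : π (liftR θ) * π (liftR h) = 0 := by
    rw [← map_mul, liftR, liftR, ← Polynomial.map_mul, ← hh]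
    simpa [Polynomial.map_sub] using hker
  have hu : π (C DualNumber.eps) * π (C DualNumber.eps) = 0 := by
    rw [← map_mul, ← C_mul, DualNumber.eps_mul_eps, C_0, map_zero]
  have hXβ : π X ^ β = 1 := by rwa [map_sub, map_pow, map_one, sub_eq_zero] at hker
  have hx : IsUnit (π X ^ k) := (IsUnit.of_pow_eq_one hXβ hβ.pos.ne').pow k
  simpa only [map_add, map_mul, map_pow] using
    Ideal.span_add_mul_unit_mul_eq (π (liftR σ)) hu hth hcop hx

/-- For odd `β` and `σ* ∣ θ* ∣ x^β − 1` over `Z₂`, the cyclic code (ideal of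
`R[x]/(x^β−1)`) generated by `θ*(x) + u·x^k·σ*(x)` equals the one generated by
`θ*(x) + u·σ*(x)`. -/
theorem cyclic_code_gen_indep_of_power (β k : ℕ) (hβpos : 0 < β) (hβ : Odd β)
    (θ σ : Polynomial (ZMod 2)) (hσθ : σ ∣ θ) (hθ : θ ∣ X ^ β - 1) :
    Ideal.span {Ideal.Quotient.mk (Ideal.span {(X : Polynomial R2) ^ β - 1})
        (liftR θ + C DualNumber.eps * X ^ k * liftR σ)} =
    Ideal.span {Ideal.Quotient.mk (Ideal.span {(X : Polynomial R2) ^ β - 1})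
        (liftR θ + C DualNumber.eps * liftR σ)} :=
  cyclic_code_gen_indep_of_power_general β k hβ θ σ hθ
end

section
/- Let C be a Z2Z2[u]-cyclic code that is self-orthogonal and contains the codeword (f(x), 0) where f(x) ∈ Z2[x]/(x^α−1). Orthogonality of (f,0) to all cyclic shifts of itself implies (x^α − 1) divides f(x)·f̃(x) in Z2[x], where f̃(x) = x^{α−1} f(1/x) mod (x^α − 1). -/
open TrivSqZeroExt

/-- The simultaneous cyclic shift on `Z₂^α × R^β`. -/
def shiftT {α β : ℕ} [NeZero α] [NeZero β] (v : Amb α β) : Amb α β :=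
  (fun i => v.1 (i - 1), fun j => v.2 (j - 1))

/-- A `Z₂Z₂[u]`-cyclic code: a linear code closed under the cyclic shift. -/
def IsCyclicCode {α β : ℕ} [NeZero α] [NeZero β] (C : Set (Amb α β)) : Prop :=
  IsLinearCode C ∧ ∀ v ∈ C, shiftT v ∈ C

/-- The cyclic code generated by a set of vectors. -/
def cyclicSpan {α β : ℕ} [NeZero α] [NeZero β] (G : Set (Amb α β)) : Set (Amb α β) :=
  ⋂₀ {D | IsCyclicCode D ∧ G ⊆ D}

open Polynomial in
/-- The vector in `Z₂^n` of coefficients of `p mod (xⁿ − 1)`. -/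
noncomputable def vecZ (n : ℕ) (p : Polynomial (ZMod 2)) : Fin n → ZMod 2 :=
  fun i => (p % (X ^ n - 1)).coeff i

open Polynomial in
/-- The vector in `R^n` corresponding to `g(x) + u·a(x)` modulo `xⁿ − 1`. -/
noncomputable def vecR (n : ℕ) (g a : Polynomial (ZMod 2)) : Fin n → R2 :=
  fun j => TrivSqZeroExt.inl ((g % (X ^ n - 1)).coeff j)
    + TrivSqZeroExt.inr ((a % (X ^ n - 1)).coeff j)

/-!
Orthogonality of `(f, 0)` to all cyclic shifts of itself says exactly that the cyclic
autocorrelation `c k = ∑ᵢ fᵢ f_{i+k}` of the coefficient vector of `f` vanishes. In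
`Z₂[x]/(x^α − 1)`, where `x` is a unit of order dividing `α`, the product `f · f̃` expands
as `∑ₖ c k · x^(α - 1 - k)`, so it is zero there.
-/

open Polynomial

theorem Fin.rev_eq_neg_add_one {n : ℕ} [NeZero n] (j : Fin n) : Fin.rev j = -(j + 1) := by
  obtain ⟨m, rfl⟩ := Nat.exists_eq_succ_of_ne_zero (NeZero.ne n)
  rw [← Fin.last_sub, show Fin.last m = -1 from Fin.ext Fin.coe_neg_one.symm]
  abel

def cyclicAutocorrelation {R : Type*} [Mul R] [AddCommMonoid R] {n : ℕ}
    (F : Fin n → R) (k : Fin n) : R :=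
  ∑ i, F i * F (i + k)

namespace AdjoinRoot

variable {R : Type*} [CommRing R] {n : ℕ}

theorem root_X_pow_sub_one_pow_val_add (a b : Fin n) :
    root (X ^ n - 1 : R[X]) ^ ((a + b : Fin n) : ℕ)
      = root (X ^ n - 1 : R[X]) ^ (a : ℕ) * root (X ^ n - 1 : R[X]) ^ (b : ℕ) := by
  have h : root (X ^ n - 1 : R[X]) ^ n = 1 := by
    rw [← sub_eq_zero, ← mk_X, ← map_pow, ← map_one (mk _), ← map_sub, mk_self]
  rw [← pow_add, Fin.val_add, ← pow_eq_pow_mod _ h]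

theorem mk_X_pow_sub_one_eq_sum {p : R[X]} (hp : p.natDegree < n) :
    mk (X ^ n - 1) p = ∑ i : Fin n, p.coeff i • root (X ^ n - 1 : R[X]) ^ (i : ℕ) := by
  rw [← aeval_eq, aeval_eq_sum_range' hp,
    Fin.sum_univ_eq_sum_range (fun i => p.coeff i • root (X ^ n - 1 : R[X]) ^ i)]

theorem mk_X_pow_sub_one_reflect [NeZero n] {p : R[X]} (hp : p.natDegree < n) :
    mk (X ^ n - 1) (reflect (n - 1) p)
      = ∑ i : Fin n, p.coeff i • root (X ^ n - 1 : R[X]) ^ (Fin.rev i : ℕ) := by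
  have hdeg : (reflect (n - 1) p).natDegree < n :=
    natDegree_reflect_le.trans_lt (max_lt (Nat.sub_one_lt (NeZero.ne n)) hp)
  rw [mk_X_pow_sub_one_eq_sum hdeg]
  refine Fintype.sum_equiv Fin.revPerm _ _ fun j => ?_
  rw [coeff_reflect, revAt_le (by omega), Fin.revPerm_apply, Fin.rev_rev, Fin.val_rev,
    show n - 1 - (j : ℕ) = n - (j + 1) by omega]

theorem mk_X_pow_sub_one_mul_reflect [NeZero n] {p : R[X]} (hp : p.natDegree < n) :
    mk (X ^ n - 1) (p * reflect (n - 1) p)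
      = ∑ k : Fin n, cyclicAutocorrelation (fun i : Fin n => p.coeff i) k
          • root (X ^ n - 1 : R[X]) ^ (Fin.rev k : ℕ) := by
  rw [map_mul, mk_X_pow_sub_one_eq_sum hp, mk_X_pow_sub_one_reflect hp, Finset.sum_mul_sum]
  simp_rw [cyclicAutocorrelation, Finset.sum_smul]
  conv_rhs => rw [Finset.sum_comm]
  -- substituting `l = i + k`, the exponent `i + rev l = rev k` no longer depends on `i`
  refine Finset.sum_congr rfl fun i _ => (Fintype.sum_equiv (Equiv.addLeft i) _ _ fun k => ?_).symm
  rw [smul_mul_smul_comm, ← root_X_pow_sub_one_pow_val_add, Equiv.coe_addLeft,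
    Fin.rev_eq_neg_add_one, Fin.rev_eq_neg_add_one, show i + -(i + k + 1) = -(k + 1) by abel]

end AdjoinRoot

open Fin.NatCast in
theorem iterate_shiftT_apply {α β : ℕ} [NeZero α] [NeZero β] (k : ℕ) (v : Amb α β) :
    shiftT^[k] v = (fun i => v.1 (i - k), fun j => v.2 (j - k)) := by
  induction k with
  | zero => simp
  | succ k ih =>
    rw [Function.iterate_succ_apply', ih]
    ext <;> simp only [shiftT, Nat.cast_succ, sub_sub, add_comm]

theorem cyclicAutocorrelation_eq_zero_of_mem {α β : ℕ} [NeZero α] [NeZero β]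
    {C : Set (Amb α β)} (hcyc : IsCyclicCode C) (hso : C ⊆ dualCode C)
    {F : Fin α → ZMod 2} (hmem : ((F, 0) : Amb α β) ∈ C) (k : Fin α) :
    cyclicAutocorrelation F k = 0 := by
  have hshift : shiftT^[(-k : Fin α).val] ((F, 0) : Amb α β) = (fun i => F (i + k), 0) := by
    rw [iterate_shiftT_apply]
    ext <;> simp
  have h := hso hmem _ (hshift ▸ Set.MapsTo.iterate hcyc.2 _ hmem)
  simpa [innerP, cyclicAutocorrelation, mul_comm] using congrArg TrivSqZeroExt.snd h

theorem vecZ_of_natDegree_lt {n : ℕ} {p : (ZMod 2)[X]} (hp : p.natDegree < n) :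
    vecZ n p = fun i : Fin n => p.coeff i := by
  have hdeg : (X ^ n - 1 : (ZMod 2)[X]).degree = n := by
    simpa using degree_X_pow_sub_C (Nat.zero_lt_of_lt hp) (1 : ZMod 2)
  have hmod : p % (X ^ n - 1) = p := by
    rw [mod_eq_self_iff (fun h => by simp [h] at hdeg), hdeg]
    exact degree_le_natDegree.trans_lt (WithBot.coe_lt_coe.2 hp)
  unfold vecZ
  rw [hmod]

open Polynomial in
/-- If a self-orthogonal `Z₂Z₂[u]`-cyclic code contains the codeword `(f(x),0)`,
then `x^α − 1` divides `f(x)·f̃(x)` over `Z₂`, where `f̃ = x^(α−1) f(1/x)`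
(realized as `reflect (α−1) f`). -/
theorem self_orthogonal_divides_f_ftilde (α β : ℕ) [NeZero α] [NeZero β]
    (C : Set (Amb α β)) (hcyc : IsCyclicCode C) (hso : C ⊆ dualCode C)
    (f : Polynomial (ZMod 2)) (hdeg : f.natDegree < α)
    (hmem : ((vecZ α f, 0) : Amb α β) ∈ C) :
    (X ^ α - 1 : Polynomial (ZMod 2)) ∣ f * reflect (α - 1) f := by
  have hcorr := cyclicAutocorrelation_eq_zero_of_mem hcyc hso hmem
  rw [vecZ_of_natDegree_lt hdeg] at hcorr
  rw [← AdjoinRoot.mk_eq_zero, AdjoinRoot.mk_X_pow_sub_one_mul_reflect hdeg]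
  simp [hcorr]
end
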